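/- For ε ∈ (0,1] let A_ε ⊆ ℝⁿ. Then: (1) the internal set [A_ε] is closed in the sharp topology on ⟨ρ⟩ℝⁿ; (2) the strongly internal set ⟨A_ε⟩ is open in the sharp topology; (3) [A_ε] = [cl(A_ε)], where cl denotes the closure in ℝⁿ; (4) ⟨A_ε⟩ = ⟨int(A_ε)⟩, where int denotes the interior in ℝⁿ. -/
import Mathlib


noncomputable section

open Set Filter Topology MeasureTheory

/-- The index set predicate: `ε ∈ (0,1]`. -/
def II (ε : ℝ) : Prop := 0 < ε ∧ ε ≤ 1

/-- A property `P ε` holds "for `ε` small". -/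
def EvSmall (P : ℝ → Prop) : Prop :=
  ∃ ε₀ : ℝ, 0 < ε₀ ∧ ε₀ ≤ 1 ∧ ∀ ε : ℝ, 0 < ε → ε ≤ ε₀ → P ε

/-- A gauge: a net `ρ` with values in `(0,1]` tending to `0` as `ε → 0⁺`. -/
structure IsGauge (ρ : ℝ → ℝ) : Prop where
  pos : ∀ ε, II ε → 0 < ρ ε
  le_one : ∀ ε, II ε → ρ ε ≤ 1
  tendsto_zero : Filter.Tendsto ρ (nhdsWithin 0 (Set.Ioi 0)) (nhds 0)

/-- A `ρ`-moderate net with values in a normed space. -/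
def Moderate (ρ : ℝ → ℝ) {E : Type*} [NormedAddCommGroup E] (x : ℝ → E) : Prop :=
  ∃ N : ℕ, EvSmall (fun ε => ‖x ε‖ ≤ ρ ε ^ (-(N : ℤ)))

/-- `ρ`-equivalence of nets. -/
def REquiv (ρ : ℝ → ℝ) {E : Type*} [NormedAddCommGroup E] (x y : ℝ → E) : Prop :=
  ∀ m : ℕ, EvSmall (fun ε => ‖x ε - y ε‖ ≤ ρ ε ^ m)

/-- The type of `ρ`-moderate nets. -/
abbrev ModNet (ρ : ℝ → ℝ) (E : Type*) [NormedAddCommGroup E] : Type _ :=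
  {x : ℝ → E // Moderate ρ x}

/-- The Robinson–Colombeau ring of generalized points `⟨ρ⟩E`. -/
def RC (ρ : ℝ → ℝ) (E : Type*) [NormedAddCommGroup E] : Type _ :=
  Quot (fun x y : ModNet ρ E => REquiv ρ x.1 y.1)

/-- The class `[x_ε]` of a moderate net. -/
def RC.mk {ρ : ℝ → ℝ} {E : Type*} [NormedAddCommGroup E] (x : ModNet ρ E) : RC ρ E :=
  Quot.mk _ x

theorem moderate_const_zero (ρ : ℝ → ℝ) {E : Type*} [NormedAddCommGroup E] :
    Moderate ρ (fun _ : ℝ => (0 : E)) := by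
  refine ⟨0, 1, one_pos, le_rfl, fun ε _ _ => ?_⟩
  simp

/-- The zero generalized point. -/
def RC.zero (ρ : ℝ → ℝ) (E : Type*) [NormedAddCommGroup E] : RC ρ E :=
  RC.mk ⟨fun _ => 0, moderate_const_zero ρ⟩

/-- The order: `x ≤ y` iff there are representatives with `x_ε ≤ y_ε` for all `ε`. -/
def RC.Le {ρ : ℝ → ℝ} (x y : RC ρ ℝ) : Prop :=
  ∃ a b : ModNet ρ ℝ, RC.mk a = x ∧ RC.mk b = y ∧ ∀ ε, II ε → a.1 ε ≤ b.1 ε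

/-- `x` is invertible in the ring `⟨ρ⟩ℝ`. -/
def RC.IsInvertible {ρ : ℝ → ℝ} (x : RC ρ ℝ) : Prop :=
  ∃ a : ModNet ρ ℝ, RC.mk a = x ∧
    ∃ b : ℝ → ℝ, Moderate ρ b ∧ REquiv ρ (fun ε => a.1 ε * b ε) (fun _ => (1 : ℝ))

/-- `r` is a nonnegative invertible generalized number, i.e. `r > 0`. -/
def RC.PosInv {ρ : ℝ → ℝ} (r : RC ρ ℝ) : Prop :=
  RC.IsInvertible r ∧ RC.Le (RC.zero ρ ℝ) r

/-- Strict order: `x < y` iff some nonnegative invertible `r` satisfies `r ≤ y - x`. -/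
def RC.Lt {ρ : ℝ → ℝ} (x y : RC ρ ℝ) : Prop :=
  ∃ r : RC ρ ℝ, RC.PosInv r ∧
    ∃ a b c : ModNet ρ ℝ, RC.mk a = x ∧ RC.mk b = y ∧ RC.mk c = r ∧
      ∀ ε, II ε → c.1 ε ≤ b.1 ε - a.1 ε

/-- `≤` between (the classes of) two scalar nets: `u ≤ v + z` for some negligible `z`. -/
def NetLe (ρ : ℝ → ℝ) (u v : ℝ → ℝ) : Prop :=
  ∃ z : ℝ → ℝ, REquiv ρ z (fun _ => (0 : ℝ)) ∧ EvSmall (fun ε => u ε ≤ v ε + z ε)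

/-- `|y - x| < r` in `⟨ρ⟩E`. -/
def NormLt {ρ : ℝ → ℝ} {E : Type*} [NormedAddCommGroup E]
    (x y : RC ρ E) (r : RC ρ ℝ) : Prop :=
  ∃ s : RC ρ ℝ, RC.PosInv s ∧
    ∃ a b : ModNet ρ E, ∃ c d : ModNet ρ ℝ,
      RC.mk a = x ∧ RC.mk b = y ∧ RC.mk c = r ∧ RC.mk d = s ∧
      ∀ ε, II ε → d.1 ε ≤ c.1 ε - ‖b.1 ε - a.1 ε‖

/-- The sharp ball `B_r(x)`. -/
def sharpBall {ρ : ℝ → ℝ} {E : Type*} [NormedAddCommGroup E]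
    (x : RC ρ E) (r : RC ρ ℝ) : Set (RC ρ E) :=
  {y | NormLt x y r}

/-- The sharp topology, generated by the balls with invertible positive radius. -/
def sharpTopology (ρ : ℝ → ℝ) (E : Type*) [NormedAddCommGroup E] :
    TopologicalSpace (RC ρ E) :=
  TopologicalSpace.generateFrom {S | ∃ x r, RC.PosInv r ∧ S = sharpBall x r}

/-- The internal set `[A_ε]`. -/
def InternalSet (ρ : ℝ → ℝ) {E : Type*} [NormedAddCommGroup E]
    (A : ℝ → Set E) : Set (RC ρ E) :=
  {x | ∃ a : ModNet ρ E, RC.mk a = x ∧ EvSmall (fun ε => a.1 ε ∈ A ε)}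

/-- The strongly internal set `⟨A_ε⟩`. -/
def StrongSet (ρ : ℝ → ℝ) {E : Type*} [NormedAddCommGroup E]
    (A : ℝ → Set E) : Set (RC ρ E) :=
  {x | ∀ a : ModNet ρ E, RC.mk a = x → EvSmall (fun ε => a.1 ε ∈ A ε)}

/-- Euclidean `ℝⁿ`. -/
abbrev RVec (n : ℕ) := EuclideanSpace ℝ (Fin n)

/-- Partial derivative in the `i`-th coordinate direction. -/
def pderivI {n : ℕ} {F : Type*} [NormedAddCommGroup F] [NormedSpace ℝ F]
    (i : Fin n) (f : RVec n → F) : RVec n → F :=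
  fun x => fderiv ℝ f x (EuclideanSpace.single i 1)

/-- The multi-index partial derivative `∂^α`. -/
def pderivM {n : ℕ} {F : Type*} [NormedAddCommGroup F] [NormedSpace ℝ F]
    (α : Fin n → ℕ) (f : RVec n → F) : RVec n → F :=
  (List.finRange n).foldr (fun i g => (pderivI i)^[α i] g) f

/-- A net of smooth functions `f_ε ∈ C^∞(Ω_ε, F)` defining a generalized smooth
function of type `X → Y`. -/
structure DefinesGSF (ρ : ℝ → ℝ) {n : ℕ} {F : Type*} [NormedAddCommGroup F]
    [NormedSpace ℝ F] (Ω : ℝ → Set (RVec n)) (f : ℝ → RVec n → F)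
    (X : Set (RC ρ (RVec n))) (Y : Set (RC ρ F)) : Prop where
  open' : ∀ ε, II ε → IsOpen (Ω ε)
  smooth : ∀ ε, II ε → ContDiffOn ℝ (⊤ : ℕ∞) (f ε) (Ω ε)
  domain : X ⊆ StrongSet ρ Ω
  val_mod : ∀ a : ModNet ρ (RVec n), RC.mk a ∈ X → Moderate ρ (fun ε => f ε (a.1 ε))
  val_mem : ∀ a : ModNet ρ (RVec n), RC.mk a ∈ X →
    ∀ hm : Moderate ρ (fun ε => f ε (a.1 ε)), RC.mk ⟨_, hm⟩ ∈ Y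
  deriv_mod : ∀ a : ModNet ρ (RVec n), RC.mk a ∈ X → ∀ α : Fin n → ℕ,
    Moderate ρ (fun ε => pderivM α (f ε) (a.1 ε))

/-- `f : X → Y` is a generalized smooth function. -/
def IsGSFOn (ρ : ℝ → ℝ) {n : ℕ} {F : Type*} [NormedAddCommGroup F] [NormedSpace ℝ F]
    (f : RC ρ (RVec n) → RC ρ F) (X : Set (RC ρ (RVec n))) (Y : Set (RC ρ F)) : Prop :=
  ∃ Ω fn, DefinesGSF ρ Ω fn X Y ∧
    ∀ a : ModNet ρ (RVec n), RC.mk a ∈ X →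
      ∀ hm : Moderate ρ (fun ε => fn ε (a.1 ε)), f (RC.mk a) = RC.mk ⟨_, hm⟩

/-- One-dimensional version: a net of smooth functions `f_ε ∈ C^∞(Ω_ε, ℝ)`,
`Ω_ε ⊆ ℝ`, defining a generalized smooth function of type `X → Y`. -/
structure DefinesGSF1 (ρ : ℝ → ℝ) (Ω : ℝ → Set ℝ) (f : ℝ → ℝ → ℝ)
    (X Y : Set (RC ρ ℝ)) : Prop where
  open' : ∀ ε, II ε → IsOpen (Ω ε)
  smooth : ∀ ε, II ε → ContDiffOn ℝ (⊤ : ℕ∞) (f ε) (Ω ε)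
  domain : X ⊆ StrongSet ρ Ω
  val_mod : ∀ a : ModNet ρ ℝ, RC.mk a ∈ X → Moderate ρ (fun ε => f ε (a.1 ε))
  val_mem : ∀ a : ModNet ρ ℝ, RC.mk a ∈ X →
    ∀ hm : Moderate ρ (fun ε => f ε (a.1 ε)), RC.mk ⟨_, hm⟩ ∈ Y
  deriv_mod : ∀ a : ModNet ρ ℝ, RC.mk a ∈ X → ∀ k : ℕ,
    Moderate ρ (fun ε => iteratedDeriv k (f ε) (a.1 ε))

/-- `f : X → Y` (`X, Y ⊆ ⟨ρ⟩ℝ`) is a generalized smooth function. -/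
def IsGSFOn1 (ρ : ℝ → ℝ) (f : RC ρ ℝ → RC ρ ℝ) (X Y : Set (RC ρ ℝ)) : Prop :=
  ∃ Ω fn, DefinesGSF1 ρ Ω fn X Y ∧
    ∀ a : ModNet ρ ℝ, RC.mk a ∈ X →
      ∀ hm : Moderate ρ (fun ε => fn ε (a.1 ε)), f (RC.mk a) = RC.mk ⟨_, hm⟩

/-- The interval `[a,b] ⊆ ⟨ρ⟩ℝ`. -/
def RCIcc {ρ : ℝ → ℝ} (a b : RC ρ ℝ) : Set (RC ρ ℝ) := {x | RC.Le a x ∧ RC.Le x b}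

/-- The interval `(a,b) ⊆ ⟨ρ⟩ℝ`. -/
def RCIoo {ρ : ℝ → ℝ} (a b : RC ρ ℝ) : Set (RC ρ ℝ) := {x | RC.Lt a x ∧ RC.Lt x b}

/-- A sharply bounded net of sets. -/
def SharplyBdd (ρ : ℝ → ℝ) {E : Type*} [NormedAddCommGroup E] (A : ℝ → Set E) : Prop :=
  ∃ N : ℕ, EvSmall (fun ε => ∀ y ∈ A ε, ‖y‖ ≤ ρ ε ^ (-(N : ℤ)))

section Stmt3Aux

open Metric

variable {ρ : ℝ → ℝ} {E : Type*} [NormedAddCommGroup E]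

lemma EvSmall.mono' {P Q : ℝ → Prop} (h : EvSmall P)
    (hpq : ∀ ε, 0 < ε → ε ≤ 1 → P ε → Q ε) : EvSmall Q := by
  obtain ⟨a, ha0, ha1, hA⟩ := h
  exact ⟨a, ha0, ha1, fun ε h0 hle => hpq ε h0 (hle.trans ha1) (hA ε h0 hle)⟩

lemma EvSmall.and' {P Q : ℝ → Prop} (hP : EvSmall P) (hQ : EvSmall Q) :
    EvSmall fun ε => P ε ∧ Q ε := by
  obtain ⟨a, ha0, ha1, hA⟩ := hP
  obtain ⟨b, hb0, hb1, hB⟩ := hQ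
  exact ⟨min a b, lt_min ha0 hb0, (min_le_left _ _).trans ha1, fun ε h0 hle =>
    ⟨hA ε h0 (hle.trans (min_le_left _ _)), hB ε h0 (hle.trans (min_le_right _ _))⟩⟩

lemma IsGauge.half (hρ : IsGauge ρ) : EvSmall fun ε => ρ ε < 1/2 := by
  have h : ∀ᶠ ε in nhdsWithin 0 (Set.Ioi 0), ρ ε < 1/2 :=
    hρ.tendsto_zero.eventually_lt_const (by norm_num)
  rw [eventually_nhdsWithin_iff, Metric.eventually_nhds_iff] at h
  obtain ⟨δ, hδ, hh⟩ := h
  refine ⟨min (δ/2) 1, lt_min (by linarith) one_pos, min_le_right _ _, fun ε h0 hle => ?_⟩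
  have : dist ε 0 < δ := by
    rw [Real.dist_eq, sub_zero, abs_of_pos h0]
    exact lt_of_le_of_lt (hle.trans (min_le_left _ _)) (by linarith)
  exact hh this h0

lemma rEquiv_refl (hρ : IsGauge ρ) (x : ℝ → E) : REquiv ρ x x := fun m =>
  ⟨1, one_pos, le_rfl, fun ε h0 h1 => by
    simpa using pow_nonneg (hρ.pos ε ⟨h0, h1⟩).le m⟩

lemma rEquiv_symm {x y : ℝ → E} (h : REquiv ρ x y) : REquiv ρ y x := fun m =>
  (h m).mono' (fun ε _ _ hh => by rwa [norm_sub_rev])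

lemma rEquiv_trans (hρ : IsGauge ρ) {x y z : ℝ → E} (h1 : REquiv ρ x y)
    (h2 : REquiv ρ y z) : REquiv ρ x z := fun m => by
  refine (((h1 (m+1)).and' (h2 (m+1))).and' hρ.half).mono' fun ε h0 h1' hh => ?_
  obtain ⟨⟨ha, hb⟩, hc⟩ := hh
  have hp := hρ.pos ε ⟨h0, h1'⟩
  have ht : ‖x ε - z ε‖ ≤ ‖x ε - y ε‖ + ‖y ε - z ε‖ := norm_sub_le_norm_sub_add_norm_sub _ _ _
  have hkey : ρ ε ^ (m+1) ≤ (1/2) * ρ ε ^ m := by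
    rw [pow_succ]
    calc ρ ε ^ m * ρ ε ≤ ρ ε ^ m * (1/2) :=
          mul_le_mul_of_nonneg_left hc.le (pow_nonneg hp.le m)
      _ = (1/2) * ρ ε ^ m := by ring
  linarith

lemma mk_eq_iff (hρ : IsGauge ρ) {a b : ModNet ρ E} :
    RC.mk a = RC.mk b ↔ REquiv ρ a.1 b.1 := by
  constructor
  · intro h
    have heq : Equivalence (fun x y : ModNet ρ E => REquiv ρ x.1 y.1) :=
      ⟨fun x => rEquiv_refl hρ x.1, rEquiv_symm, rEquiv_trans hρ⟩
    exact heq.eqvGen_iff.mp (Quot.eqvGen_exact h)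
  · exact fun h => Quot.sound (r := fun x y : ModNet ρ E => REquiv ρ x.1 y.1) h

lemma moderate_of_close (hρ : IsGauge ρ) {x y : ℝ → E} (hx : Moderate ρ x)
    (h : EvSmall fun ε => ‖x ε - y ε‖ ≤ 2) : Moderate ρ y := by
  obtain ⟨N, hN⟩ := hx
  refine ⟨N + 2, ((hN.and' h).and' hρ.half).mono' fun ε h0 h1 hh => ?_⟩
  obtain ⟨⟨ha, hb⟩, hc⟩ := hh
  have hp := hρ.pos ε ⟨h0, h1⟩
  have hl := hρ.le_one ε ⟨h0, h1⟩
  have e1 : ρ ε ^ (-(N:ℤ)) = (ρ ε ^ N)⁻¹ := by rw [zpow_neg, zpow_natCast]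
  have e2 : ρ ε ^ (-((N+2:ℕ):ℤ)) = (ρ ε ^ (N+2))⁻¹ := by rw [zpow_neg, zpow_natCast]
  rw [e1] at ha
  rw [e2]
  have hNpos : (0:ℝ) < ρ ε ^ N := pow_pos hp N
  have hsq : ρ ε ^ 2 ≤ 1/4 := by nlinarith
  have h4 : (ρ ε ^ (N+2))⁻¹ = (ρ ε ^ N)⁻¹ * (ρ ε ^ 2)⁻¹ := by rw [pow_add, mul_inv]
  have h5 : (4:ℝ) ≤ (ρ ε ^ 2)⁻¹ := by
    rw [show (4:ℝ) = (1/4)⁻¹ by norm_num]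
    exact inv_anti₀ (by positivity) hsq
  have h6 : (1:ℝ) ≤ (ρ ε ^ N)⁻¹ := by
    rw [show (1:ℝ) = (1:ℝ)⁻¹ by norm_num]
    exact inv_anti₀ hNpos (pow_le_one₀ hp.le hl)
  have h7 : (ρ ε ^ N)⁻¹ * 4 ≤ (ρ ε ^ N)⁻¹ * (ρ ε ^ 2)⁻¹ :=
    mul_le_mul_of_nonneg_left h5 (by positivity)
  have ht : ‖y ε‖ ≤ ‖x ε‖ + ‖x ε - y ε‖ := by
    calc ‖y ε‖ = ‖x ε - (x ε - y ε)‖ := by rw [sub_sub_cancel]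
      _ ≤ ‖x ε‖ + ‖x ε - y ε‖ := norm_sub_le _ _
  rw [h4]
  linarith

/-- The net `ε ↦ ρ ε ^ k` as a moderate net. -/
noncomputable def rhoNet (hρ : IsGauge ρ) (k : ℕ) : ModNet ρ ℝ :=
  ⟨fun ε => ρ ε ^ k, 0, 1, one_pos, le_rfl, fun ε h0 h1 => by
    have hp := hρ.pos ε ⟨h0, h1⟩
    have hl := hρ.le_one ε ⟨h0, h1⟩
    simp only [Real.norm_eq_abs, Nat.cast_zero, neg_zero, zpow_zero,
      abs_of_pos (pow_pos hp k)]
    exact pow_le_one₀ hp.le hl⟩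

lemma posInv_rhoNet (hρ : IsGauge ρ) (k : ℕ) : RC.PosInv (RC.mk (rhoNet hρ k)) := by
  constructor
  · refine ⟨rhoNet hρ k, rfl, fun ε => (ρ ε ^ k)⁻¹, ⟨k, 1, one_pos, le_rfl,
      fun ε h0 h1 => ?_⟩, fun m => ⟨1, one_pos, le_rfl, fun ε h0 h1 => ?_⟩⟩
    · have hp := hρ.pos ε ⟨h0, h1⟩
      show ‖(ρ ε ^ k)⁻¹‖ ≤ ρ ε ^ (-(k:ℤ))
      rw [Real.norm_eq_abs, abs_of_pos (by positivity), zpow_neg, zpow_natCast]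
    · have hp := hρ.pos ε ⟨h0, h1⟩
      show ‖ρ ε ^ k * (ρ ε ^ k)⁻¹ - 1‖ ≤ ρ ε ^ m
      have : ρ ε ^ k * (ρ ε ^ k)⁻¹ = 1 := mul_inv_cancel₀ (by positivity)
      rw [this]
      simpa using pow_nonneg hp.le m
  · exact ⟨⟨fun _ => 0, moderate_const_zero ρ⟩, rhoNet hρ k, rfl, rfl,
      fun ε hII => (pow_pos (hρ.pos ε hII) k).le⟩

lemma mem_sharpBall_self (hρ : IsGauge ρ) (a : ModNet ρ E) (k : ℕ) :
    NormLt (RC.mk a) (RC.mk a) (RC.mk (rhoNet hρ k)) :=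
  ⟨RC.mk (rhoNet hρ k), posInv_rhoNet hρ k, a, a, rhoNet hρ k, rhoNet hρ k,
    rfl, rfl, rfl, rfl, fun ε _ => by simp⟩

lemma normLt_bound (hρ : IsGauge ρ) {a b : ModNet ρ E} {k : ℕ}
    (h : NormLt (RC.mk a) (RC.mk b) (RC.mk (rhoNet hρ k))) :
    EvSmall fun ε => ‖b.1 ε - a.1 ε‖ ≤ 4 * ρ ε ^ k := by
  obtain ⟨s, ⟨_, hle⟩, a', b', c, d, ha', hb', hc, hd, hptw⟩ := h
  obtain ⟨p, q, hp0, hqs, hpq⟩ := hle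
  -- REquiv facts
  have F1 : REquiv ρ p.1 (fun _ => (0:ℝ)) := by
    have : RC.mk p = RC.mk (⟨fun _ => 0, moderate_const_zero ρ⟩ : ModNet ρ ℝ) := hp0
    exact (mk_eq_iff hρ).mp this
  have F2 : REquiv ρ q.1 d.1 := (mk_eq_iff hρ).mp (hqs.trans hd.symm)
  have F3 : REquiv ρ c.1 (rhoNet hρ k).1 := (mk_eq_iff hρ).mp hc
  have F4 : REquiv ρ a'.1 a.1 := (mk_eq_iff hρ).mp ha'
  have F5 : REquiv ρ b'.1 b.1 := (mk_eq_iff hρ).mp hb'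
  have C1 := ((F1 (k+1)).and' (F2 (k+1))).and' ((F3 (k+1)).and' (F4 (k+1)))
  have C2 := C1.and' ((F5 (k+1)).and' hρ.half)
  refine C2.mono' fun ε h0 h1 hh => ?_
  obtain ⟨⟨⟨G1, G2⟩, ⟨G3, G4⟩⟩, ⟨G5, G6⟩⟩ := hh
  have hp := hρ.pos ε ⟨h0, h1⟩
  have hII : II ε := ⟨h0, h1⟩
  simp only [Real.norm_eq_abs, sub_zero] at G1 G2 G3
  have hkey : ρ ε ^ (k+1) ≤ (1/2) * ρ ε ^ k := by
    rw [pow_succ]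
    nlinarith [pow_nonneg hp.le k]
  have hG1 := abs_le.mp G1
  have hG2 := abs_le.mp G2
  have hG3' : |c.1 ε - ρ ε ^ k| ≤ ρ ε ^ (k+1) := G3
  have hG3 := abs_le.mp hG3'
  have hd1 := hptw ε hII
  have hpq1 := hpq ε hII
  have ht : ‖b.1 ε - a.1 ε‖ ≤ ‖b.1 ε - b'.1 ε‖ + (‖b'.1 ε - a'.1 ε‖ + ‖a'.1 ε - a.1 ε‖) := by
    have : b.1 ε - a.1 ε = (b.1 ε - b'.1 ε) + ((b'.1 ε - a'.1 ε) + (a'.1 ε - a.1 ε)) := by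
      abel
    rw [this]
    exact (norm_add_le _ _).trans (by gcongr; exact norm_add_le _ _)
  have hbb : ‖b.1 ε - b'.1 ε‖ ≤ ρ ε ^ (k+1) := by rwa [norm_sub_rev]
  linarith

end Stmt3Aux

section Stmt3Aux2

open Metric

variable {ρ : ℝ → ℝ} {E : Type*} [NormedAddCommGroup E]

lemma evSmall_le_const {c : ℝ} (hc : 0 < c) : EvSmall fun ε => ε ≤ c :=
  ⟨min c 1, lt_min hc one_pos, min_le_right _ _, fun _ h0 hle => hle.trans (min_le_left _ _)⟩

lemma internal_of_close (hρ : IsGauge ρ) {A : ℝ → Set E} (a : ModNet ρ E)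
    (h : ∀ m : ℕ, EvSmall fun ε => ∃ p ∈ A ε, dist (a.1 ε) p ≤ ρ ε ^ m) :
    RC.mk a ∈ InternalSet ρ A := by
  classical
  have key : ∀ ε : ℝ, ∃ q : E, ((A ε).Nonempty ∧ 0 < ρ ε) →
      q ∈ A ε ∧ dist (a.1 ε) q < Metric.infDist (a.1 ε) (A ε) + ρ ε ^ (⌈1/ε⌉₊) := by
    intro ε
    by_cases hh : (A ε).Nonempty ∧ 0 < ρ ε
    · obtain ⟨q, hq1, hq2⟩ := (Metric.infDist_lt_iff hh.1).mp
        (lt_add_of_pos_right _ (pow_pos hh.2 (⌈1/ε⌉₊)))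
      exact ⟨q, fun _ => ⟨hq1, hq2⟩⟩
    · exact ⟨a.1 ε, fun h' => absurd h' hh⟩
  choose y hyspec using key
  have hclose : ∀ m : ℕ, EvSmall fun ε => dist (a.1 ε) (y ε) ≤ 2 * ρ ε ^ m := by
    intro m
    refine ((h m).and' (evSmall_le_const (c := 1/(m+1)) (by positivity))).mono'
      fun ε h0 h1 hh => ?_
    obtain ⟨⟨p, hpA, hpd⟩, hεm⟩ := hh
    have hp := hρ.pos ε ⟨h0, h1⟩
    have hl := hρ.le_one ε ⟨h0, h1⟩
    obtain ⟨hyA, hyd⟩ := hyspec ε ⟨⟨p, hpA⟩, hp⟩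
    have hinf : Metric.infDist (a.1 ε) (A ε) ≤ ρ ε ^ m :=
      (Metric.infDist_le_dist_of_mem hpA).trans hpd
    have hm1 : (m:ℝ) < 1/ε := by
      have h2 : ε * (m+1) ≤ 1 := by
        have := (le_div_iff₀ (by positivity : (0:ℝ) < (m:ℝ)+1)).mp
          (by exact_mod_cast hεm)
        linarith [this]
      have : (m:ℝ) + 1 ≤ 1/ε := by
        rw [le_div_iff₀ h0]; linarith [h2]
      linarith
    have hmceil : m ≤ ⌈1/ε⌉₊ := (Nat.lt_ceil.mpr hm1).le
    have hcp : ρ ε ^ (⌈1/ε⌉₊) ≤ ρ ε ^ m := pow_le_pow_of_le_one hp.le hl hmceil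
    linarith
  have hreq : REquiv ρ a.1 y := by
    intro m
    refine ((hclose (m+1)).and' hρ.half).mono' fun ε h0 h1 hh => ?_
    obtain ⟨hd, hhal⟩ := hh
    have hp := hρ.pos ε ⟨h0, h1⟩
    have hkey : ρ ε ^ (m+1) ≤ (1/2) * ρ ε ^ m := by
      rw [pow_succ]; nlinarith [pow_nonneg hp.le m]
    rw [← dist_eq_norm]
    linarith
  have hmod : Moderate ρ y :=
    moderate_of_close hρ a.2 ((hclose 0).mono' fun ε h0 h1 hd => by
      rw [← dist_eq_norm]; simpa using hd)
  refine ⟨⟨y, hmod⟩, (mk_eq_iff hρ).mpr (rEquiv_symm hreq), ?_⟩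
  exact (h 0).mono' fun ε h0 h1 hh => by
    obtain ⟨p, hpA, _⟩ := hh
    exact (hyspec ε ⟨⟨p, hpA⟩, hρ.pos ε ⟨h0, h1⟩⟩).1

private noncomputable def badStep (Q : ℕ → ℝ → Prop)
    (H : ∀ (m : ℕ) (δ : ℝ), 0 < δ → δ ≤ 1 → ∃ ε, 0 < ε ∧ ε ≤ δ ∧ Q m ε) (m : ℕ)
    (p : {x : ℝ // 0 < x ∧ x ≤ (2:ℝ)⁻¹ ^ m ∧ Q m x}) :
    {x : ℝ // 0 < x ∧ x ≤ (2:ℝ)⁻¹ ^ (m+1) ∧ Q (m+1) x} :=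
  have hδ0 : 0 < min (p.1/2) ((2:ℝ)⁻¹ ^ (m+1)) :=
    lt_min (by have := p.2.1; linarith) (by positivity)
  have hδ1 : min (p.1/2) ((2:ℝ)⁻¹ ^ (m+1)) ≤ 1 :=
    (min_le_right _ _).trans (pow_le_one₀ (by norm_num) (by norm_num))
  ⟨(H (m+1) _ hδ0 hδ1).choose, by
    obtain ⟨h1, h2, h3⟩ := (H (m+1) _ hδ0 hδ1).choose_spec
    exact ⟨h1, h2.trans (min_le_right _ _), h3⟩⟩

private lemma badStep_lt (Q : ℕ → ℝ → Prop)
    (H : ∀ (m : ℕ) (δ : ℝ), 0 < δ → δ ≤ 1 → ∃ ε, 0 < ε ∧ ε ≤ δ ∧ Q m ε) (m : ℕ)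
    (p : {x : ℝ // 0 < x ∧ x ≤ (2:ℝ)⁻¹ ^ m ∧ Q m x}) :
    (badStep Q H m p).1 < p.1 := by
  have hp := p.2.1
  have hδ0 : 0 < min (p.1/2) ((2:ℝ)⁻¹ ^ (m+1)) :=
    lt_min (by linarith) (by positivity)
  have hδ1 : min (p.1/2) ((2:ℝ)⁻¹ ^ (m+1)) ≤ 1 :=
    (min_le_right _ _).trans (pow_le_one₀ (by norm_num) (by norm_num))
  have h2 := (H (m+1) _ hδ0 hδ1).choose_spec.2.1
  calc (badStep Q H m p).1 = (H (m+1) _ hδ0 hδ1).choose := rfl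
    _ ≤ min (p.1/2) ((2:ℝ)⁻¹ ^ (m+1)) := h2
    _ ≤ p.1/2 := min_le_left _ _
    _ < p.1 := by linarith

private noncomputable def badSeq (Q : ℕ → ℝ → Prop)
    (H : ∀ (m : ℕ) (δ : ℝ), 0 < δ → δ ≤ 1 → ∃ ε, 0 < ε ∧ ε ≤ δ ∧ Q m ε) :
    (m : ℕ) → {x : ℝ // 0 < x ∧ x ≤ (2:ℝ)⁻¹ ^ m ∧ Q m x}
  | 0 => ⟨(H 0 1 one_pos le_rfl).choose, by
      obtain ⟨h1, h2, h3⟩ := (H 0 1 one_pos le_rfl).choose_spec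
      exact ⟨h1, by simpa using h2, h3⟩⟩
  | (m+1) => badStep Q H m (badSeq Q H m)

private lemma badSeq_succ_lt (Q : ℕ → ℝ → Prop)
    (H : ∀ (m : ℕ) (δ : ℝ), 0 < δ → δ ≤ 1 → ∃ ε, 0 < ε ∧ ε ≤ δ ∧ Q m ε) (m : ℕ) :
    (badSeq Q H (m+1)).1 < (badSeq Q H m).1 := by
  rw [show badSeq Q H (m+1) = badStep Q H m (badSeq Q H m) from rfl]
  exact badStep_lt Q H m (badSeq Q H m)

lemma strong_ball (hρ : IsGauge ρ) {A : ℝ → Set E} (a : ModNet ρ E)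
    (hx : RC.mk a ∈ StrongSet ρ A) :
    ∃ m : ℕ, EvSmall fun ε => Metric.ball (a.1 ε) (ρ ε ^ m) ⊆ A ε := by
  classical
  by_contra H
  push_neg at H
  have H' : ∀ (m : ℕ) (δ : ℝ), 0 < δ → δ ≤ 1 →
      ∃ ε, 0 < ε ∧ ε ≤ δ ∧ ¬ Metric.ball (a.1 ε) (ρ ε ^ m) ⊆ A ε := by
    intro m δ h0 h1
    have hm := H m
    rw [EvSmall] at hm
    push_neg at hm
    exact hm δ h0 h1
  set Q : ℕ → ℝ → Prop := fun m ε => ¬ Metric.ball (a.1 ε) (ρ ε ^ m) ⊆ A ε with hQ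
  have hanti : StrictAnti fun m => (badSeq Q H' m).1 :=
    strictAnti_nat_of_succ_lt (badSeq_succ_lt Q H')
  have hw : ∀ m, ∃ p, p ∈ Metric.ball (a.1 (badSeq Q H' m).1) (ρ (badSeq Q H' m).1 ^ m) ∧
      p ∉ A (badSeq Q H' m).1 := fun m => Set.not_subset.mp (badSeq Q H' m).2.2.2
  choose w hw1 hw2 using hw
  set y : ℝ → E := fun ε => if h : ∃ m, (badSeq Q H' m).1 = ε then w h.choose else a.1 ε
    with hy
  have hone : ∀ m, (badSeq Q H' m).1 ≤ 1 := fun m =>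
    (badSeq Q H' m).2.2.1.trans (pow_le_one₀ (by norm_num) (by norm_num))
  have hchoice : ∀ (ε : ℝ) (h : ∃ m, (badSeq Q H' m).1 = ε),
      y ε = w h.choose ∧ (badSeq Q H' h.choose).1 = ε :=
    fun ε h => ⟨by rw [hy]; exact dif_pos h, h.choose_spec⟩
  have hreq : REquiv ρ a.1 y := by
    intro k
    refine ⟨(badSeq Q H' k).1, (badSeq Q H' k).2.1, hone k, fun ε h0 hle => ?_⟩
    have h1' : ε ≤ 1 := hle.trans (hone k)
    by_cases h : ∃ m, (badSeq Q H' m).1 = ε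
    · obtain ⟨hy1, hy2⟩ := hchoice ε h
      have hjk : k ≤ h.choose := by
        by_contra hlt
        push_neg at hlt
        have hh : (badSeq Q H' k).1 < (badSeq Q H' h.choose).1 := hanti hlt
        rw [hy2] at hh
        exact absurd hle (not_le.mpr hh)
      have hball := hw1 h.choose
      rw [hy2] at hball
      have hd : dist (a.1 ε) (w h.choose) < ρ ε ^ h.choose := by
        rw [dist_comm]; exact Metric.mem_ball.mp hball
      show ‖a.1 ε - y ε‖ ≤ ρ ε ^ k
      rw [hy1, ← dist_eq_norm]
      exact hd.le.trans (pow_le_pow_of_le_one (hρ.pos ε ⟨h0, h1'⟩).le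
        (hρ.le_one ε ⟨h0, h1'⟩) hjk)
    · have hya : y ε = a.1 ε := by rw [hy]; exact dif_neg h
      show ‖a.1 ε - y ε‖ ≤ ρ ε ^ k
      rw [hya]
      simpa using pow_nonneg (hρ.pos ε ⟨h0, h1'⟩).le k
  have hmod : Moderate ρ y :=
    moderate_of_close hρ a.2 ((hreq 0).mono' fun ε h0 h1 hb => by
      simp only [pow_zero] at hb; linarith)
  obtain ⟨ε₀, hε₀0, hε₀1, hmem⟩ := hx ⟨y, hmod⟩ ((mk_eq_iff hρ).mpr (rEquiv_symm hreq))
  obtain ⟨m, hm⟩ := exists_pow_lt_of_lt_one hε₀0 (by norm_num : (2:ℝ)⁻¹ < 1)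
  have h1 : (badSeq Q H' m).1 ≤ ε₀ := le_of_lt (lt_of_le_of_lt (badSeq Q H' m).2.2.1 hm)
  have hyA := hmem _ (badSeq Q H' m).2.1 h1
  have hex : ∃ j, (badSeq Q H' j).1 = (badSeq Q H' m).1 := ⟨m, rfl⟩
  obtain ⟨hy1, hy2⟩ := hchoice _ hex
  have hnot := hw2 hex.choose
  rw [hy2] at hnot
  have hyA' : y (badSeq Q H' m).1 ∈ A (badSeq Q H' m).1 := hyA
  rw [hy1] at hyA'
  exact hnot hyA'

end Stmt3Aux2

/-- internal sets are sharply closed, strongly internal sets are sharply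
open, `[A_ε] = [cl A_ε]` and `⟨A_ε⟩ = ⟨int A_ε⟩`
(Theorem `thm:strongMembershipAndDistanceComplement` (iii)-(vi)). -/
theorem stmt_3 {ρ : ℝ → ℝ} (hρ : IsGauge ρ) {n : ℕ} (A : ℝ → Set (RVec n)) :
    @IsClosed _ (sharpTopology ρ (RVec n)) (InternalSet ρ A) ∧
    @IsOpen _ (sharpTopology ρ (RVec n)) (StrongSet ρ A) ∧
    InternalSet ρ A = InternalSet ρ (fun ε => closure (A ε)) ∧
    StrongSet ρ A = StrongSet ρ (fun ε => interior (A ε)) := by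
  letI : TopologicalSpace (RC ρ (RVec n)) := sharpTopology ρ (RVec n)
  have hball_open : ∀ (x : RC ρ (RVec n)) (k : ℕ),
      IsOpen (sharpBall x (RC.mk (rhoNet hρ k))) := by
    intro x k
    exact TopologicalSpace.isOpen_generateFrom_of_mem
      ⟨x, RC.mk (rhoNet hρ k), posInv_rhoNet hρ k, rfl⟩
  refine ⟨?_, ?_, ?_, ?_⟩
  · -- internal sets are closed
    rw [← isOpen_compl_iff, isOpen_iff_forall_mem_open]
    intro x hx
    obtain ⟨a, ha⟩ := Quot.exists_rep x
    have ha' : RC.mk a = x := ha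
    subst ha'
    have hnx : ¬ ∀ m : ℕ, EvSmall fun ε => ∃ p ∈ A ε, dist (a.1 ε) p ≤ ρ ε ^ m := by
      intro hcl
      exact hx (internal_of_close hρ a hcl)
    push_neg at hnx
    obtain ⟨m₀, hm₀⟩ := hnx
    refine ⟨sharpBall (RC.mk a) (RC.mk (rhoNet hρ (m₀+3))), ?_, hball_open _ _,
      mem_sharpBall_self hρ a (m₀+3)⟩
    intro z hz hzI
    obtain ⟨b, hb, hbA⟩ := hzI
    rw [← hb] at hz
    have hbd := normLt_bound hρ hz
    apply hm₀
    refine ((hbd.and' hbA).and' hρ.half).mono' fun ε h0 h1 hh => ?_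
    obtain ⟨⟨hd, hA⟩, hhalf⟩ := hh
    refine ⟨b.1 ε, hA, ?_⟩
    have hp := hρ.pos ε ⟨h0, h1⟩
    rw [dist_eq_norm, norm_sub_rev]
    have hcube : ρ ε ^ 3 ≤ 1/8 := by
      calc ρ ε ^ 3 ≤ (1/2:ℝ)^3 := pow_le_pow_left₀ hp.le hhalf.le 3
        _ = 1/8 := by norm_num
    have hnn : (0:ℝ) ≤ ρ ε ^ m₀ := pow_nonneg hp.le m₀
    have e3 : ρ ε ^ (m₀+3) = ρ ε ^ m₀ * ρ ε ^ 3 := pow_add _ _ _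
    rw [e3] at hd
    have h4 : ρ ε ^ m₀ * ρ ε ^ 3 ≤ ρ ε ^ m₀ * (1/8) := mul_le_mul_of_nonneg_left hcube hnn
    linarith
  · -- strongly internal sets are open
    rw [isOpen_iff_forall_mem_open]
    intro x hx
    obtain ⟨a, ha⟩ := Quot.exists_rep x
    have ha' : RC.mk a = x := ha
    subst ha'
    obtain ⟨m, hm⟩ := strong_ball hρ a hx
    refine ⟨sharpBall (RC.mk a) (RC.mk (rhoNet hρ (m+3))), ?_, hball_open _ _,
      mem_sharpBall_self hρ a (m+3)⟩
    intro z hz b hb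
    rw [← hb] at hz
    have hbd := normLt_bound hρ hz
    refine ((hbd.and' hm).and' hρ.half).mono' fun ε h0 h1 hh => ?_
    obtain ⟨⟨hd, hsub⟩, hhalf⟩ := hh
    apply hsub
    rw [Metric.mem_ball, dist_eq_norm]
    have hp := hρ.pos ε ⟨h0, h1⟩
    have hcube : ρ ε ^ 3 ≤ 1/8 := by
      calc ρ ε ^ 3 ≤ (1/2:ℝ)^3 := pow_le_pow_left₀ hp.le hhalf.le 3
        _ = 1/8 := by norm_num
    have hpm : (0:ℝ) < ρ ε ^ m := pow_pos hp m
    have e3 : ρ ε ^ (m+3) = ρ ε ^ m * ρ ε ^ 3 := pow_add _ _ _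
    rw [e3] at hd
    have h4 : ρ ε ^ m * ρ ε ^ 3 ≤ ρ ε ^ m * (1/8) := mul_le_mul_of_nonneg_left hcube hpm.le
    linarith
  · -- [A] = [cl A]
    ext x
    constructor
    · rintro ⟨b, hb, hbA⟩
      exact ⟨b, hb, hbA.mono' fun ε _ _ h => subset_closure h⟩
    · rintro ⟨b, hb, hbA⟩
      rw [← hb]
      apply internal_of_close hρ b
      intro m
      refine hbA.mono' fun ε h0 h1 hcl => ?_
      have hp := pow_pos (hρ.pos ε ⟨h0, h1⟩) m
      obtain ⟨p, hpA, hpd⟩ := Metric.mem_closure_iff.mp hcl _ hp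
      exact ⟨p, hpA, hpd.le⟩
  · -- ⟨A⟩ = ⟨int A⟩
    ext x
    constructor
    · intro hx b hb
      have hx' : RC.mk b ∈ StrongSet ρ A := by rw [hb]; exact hx
      obtain ⟨m, hm⟩ := strong_ball hρ b hx'
      refine hm.mono' fun ε h0 h1 hsub => ?_
      exact mem_interior.mpr ⟨Metric.ball (b.1 ε) (ρ ε ^ m), hsub, Metric.isOpen_ball,
        Metric.mem_ball_self (pow_pos (hρ.pos ε ⟨h0, h1⟩) m)⟩
    · intro hx b hb
      exact (hx b hb).mono' fun ε _ _ h => interior_subset h
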